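/- arXiv:2006.15374 — 6 statements merged into one kernel-verified Lean document; each statement's English description precedes it below -/
import Mathlib

section
/- Let f : Finset V → ℝ be a monotone submodular set function on a finite type V with f(∅) = 0. Let U be a finite set of size h, and let k ≤ h. Build a greedy sequence U_0 = ∅, U_t = U_{t-1} ∪ {i_t} where i_t ∈ U \ U_{t-1} maximizes f(U_{t-1} ∪ {i}) - f(U_{t-1}). Then the marginal gains Δ_t = f(U_t) - f(U_{t-1}) are non-increasing in t, and consequently f(U)/h ≤ f(U_k)/k. -/
theorem stmt_5 {V : Type*} [Fintype V] [DecidableEq V]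
    (f : Finset V → ℝ)
    (hmono : ∀ S T : Finset V, S ⊆ T → f S ≤ f T)
    (hsub : ∀ S T : Finset V, S ⊆ T → ∀ i ∉ T,
      f (insert i T) - f T ≤ f (insert i S) - f S)
    (hempty : f ∅ = 0)
    (U : Finset V) (h k : ℕ) (hhU : U.card = h) (hk1 : 1 ≤ k) (hkh : k ≤ h)
    (seq : ℕ → Finset V) (hseq0 : seq 0 = ∅)
    (hgreedy : ∀ t ∈ Finset.Icc 1 h, ∃ i ∈ U \ seq (t - 1),
      seq t = insert i (seq (t - 1)) ∧
      ∀ j ∈ U \ seq (t - 1),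
        f (insert j (seq (t - 1))) - f (seq (t - 1)) ≤
          f (insert i (seq (t - 1))) - f (seq (t - 1))) :
    (∀ t ∈ Finset.Icc 1 (h - 1),
        f (seq (t + 1)) - f (seq t) ≤ f (seq t) - f (seq (t - 1))) ∧
      f U / (h : ℝ) ≤ f (seq k) / (k : ℝ) := by
  have hchain : ∀ t, 1 ≤ t → t ≤ h → ∃ i ∈ U \ seq (t-1),
      seq t = insert i (seq (t-1)) ∧ ∀ j ∈ U \ seq (t-1),
        f (insert j (seq (t-1))) - f (seq (t-1)) ≤
          f (insert i (seq (t-1))) - f (seq (t-1)) := by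
    intro t h1 h2
    exact hgreedy t (Finset.mem_Icc.mpr ⟨h1, h2⟩)
  have hcard : ∀ t, t ≤ h → seq t ⊆ U ∧ (seq t).card = t := by
    intro t
    induction t with
    | zero => intro _; simp [hseq0]
    | succ n ih =>
      intro hn
      obtain ⟨i, hi, heq, _⟩ := hchain (n+1) (by omega) hn
      obtain ⟨hsubU, hc⟩ := ih (by omega)
      simp only [Nat.add_sub_cancel] at heq hi
      rw [Finset.mem_sdiff] at hi
      constructor
      · rw [heq]; exact Finset.insert_subset hi.1 hsubU
      · rw [heq, Finset.card_insert_of_notMem hi.2, hc]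
  set g : ℕ → ℝ := fun t => f (seq t) with hg
  have hd1 : ∀ t, 1 ≤ t → t < h → g (t+1) - g t ≤ g t - g (t-1) := by
    intro t h1 h2
    obtain ⟨i, hi, heq, hmax⟩ := hchain t h1 (by omega)
    obtain ⟨i', hi', heq', _⟩ := hchain (t+1) (by omega) (by omega)
    simp only [Nat.add_sub_cancel] at heq' hi'
    rw [Finset.mem_sdiff] at hi hi'
    have hsub1 : seq (t-1) ⊆ seq t := by rw [heq]; exact Finset.subset_insert _ _
    have hi'n : i' ∉ seq (t-1) := fun hmem => hi'.2 (hsub1 hmem)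
    have step1 : g (t+1) - g t ≤ f (insert i' (seq (t-1))) - f (seq (t-1)) := by
      simp only [hg]
      rw [heq']
      exact hsub _ _ hsub1 i' hi'.2
    have step2 : f (insert i' (seq (t-1))) - f (seq (t-1)) ≤ g t - g (t-1) := by
      have h3 := hmax i' (Finset.mem_sdiff.mpr ⟨hi'.1, hi'n⟩)
      simp only [hg]
      rw [heq]
      exact h3
    linarith
  have hdmono : ∀ s t, s ≤ t → t < h → g (t+1) - g t ≤ g (s+1) - g s := by
    intro s t hst
    induction t with
    | zero =>
      intro _
      have hs0 : s = 0 := by omega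
      subst hs0
      exact le_rfl
    | succ n ih =>
      intro hn
      rcases Nat.eq_or_lt_of_le hst with rfl | hlt
      · exact le_refl _
      · have h1 := hd1 (n+1) (by omega) hn
        simp only [Nat.add_sub_cancel] at h1
        have h2 := ih (by omega) (by omega)
        linarith
  have htel : ∀ n, (Finset.range n).sum (fun t => g (t+1) - g t) = g n := by
    intro n
    rw [Finset.sum_range_sub]
    simp [hg, hseq0, hempty]
  have hUh : seq h = U := by
    obtain ⟨hs, hc⟩ := hcard h le_rfl
    exact Finset.eq_of_subset_of_card_le hs (by rw [hc, hhU])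
  have hkk : k - 1 + 1 = k := by omega
  set D := g k - g (k-1) with hD
  have hgk : (k : ℝ) * D ≤ g k := by
    have hb : ∀ t ∈ Finset.range k, D ≤ g (t+1) - g t := by
      intro t ht
      rw [Finset.mem_range] at ht
      have h1 := hdmono t (k-1) (by omega) (by omega)
      rw [hkk] at h1
      exact h1
    have h1 := Finset.card_nsmul_le_sum (Finset.range k) (fun t => g (t+1) - g t) D hb
    rw [Finset.card_range, nsmul_eq_mul, htel] at h1
    exact h1
  have hgh : g h - g k ≤ ((h:ℝ) - k) * D := by
    have hsplit : g k + (Finset.Ico k h).sum (fun t => g (t+1) - g t) = g h := by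
      rw [← htel h, ← htel k, Finset.sum_range_add_sum_Ico _ hkh]
    have hbd : ∀ t ∈ Finset.Ico k h, g (t+1) - g t ≤ D := by
      intro t ht
      rw [Finset.mem_Ico] at ht
      have h1 := hdmono (k-1) t (by omega) ht.2
      rw [hkk] at h1
      exact h1
    have h2 := Finset.sum_le_card_nsmul (Finset.Ico k h) _ D hbd
    rw [Nat.card_Ico, nsmul_eq_mul, Nat.cast_sub hkh] at h2
    linarith
  constructor
  · intro t ht
    rw [Finset.mem_Icc] at ht
    exact hd1 t ht.1 (by omega)
  · have hhpos : (0:ℝ) < h := by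
      have : 0 < h := by omega
      exact_mod_cast this
    have hkpos : (0:ℝ) < k := by exact_mod_cast hk1
    have hkR : (k:ℝ) ≤ h := by exact_mod_cast hkh
    rw [div_le_div_iff₀ hhpos hkpos, ← hUh]
    nlinarith [hgk, hgh, hkpos.le, sub_nonneg.mpr hkR,
      mul_le_mul_of_nonneg_left hgk (sub_nonneg.mpr hkR)]
end

section
/- Let f : Finset V → ℝ be a monotone submodular set function with f(∅) = 0 on a finite type V, and let OPT(k) denote the maximum of f over sets of size at most k. Then for any finite set U of size h ≥ k ≥ 1, f(U) ≤ (h/k)·OPT(k). -/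
/-!
Grow a subset `G ⊆ U` greedily, always adding the element of `U \ G` with the largest marginal
gain. By submodularity the gains of the remaining elements add up to at least `f U - f G`, so the
best of them recovers at least a `1 / #(U \ G)` fraction of that gap. Inductively the greedy set of
size `j` satisfies `j * f U ≤ #U * f G`; at `j = k` its value is at most `OPT`.
-/

section

open Finset

variable {V : Type*} [DecidableEq V]

def IsSubmodular (f : Finset V → ℝ) : Prop :=
  ∀ S T : Finset V, S ⊆ T → ∀ i ∉ T, f (insert i T) - f T ≤ f (insert i S) - f S

namespace IsSubmodular

variable {f : Finset V → ℝ}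

theorem sub_le_sum_marginal (hf : IsSubmodular f) (S D : Finset V) (hSD : Disjoint S D) :
    f (S ∪ D) - f S ≤ ∑ u ∈ D, (f (insert u S) - f S) := by
  induction D using Finset.induction_on with
  | empty => simp
  | @insert a D haD ih =>
    have haS : a ∉ S := fun haS => disjoint_left.mp hSD haS (mem_insert_self a D)
    have hgain : f (insert a (S ∪ D)) - f (S ∪ D) ≤ f (insert a S) - f S :=
      hf S (S ∪ D) subset_union_left a (by simp [haS, haD])
    have := ih (hSD.mono_right (subset_insert a D))
    rw [union_insert, sum_insert haD]
    linarith

theorem exists_marginal_ge (hf : IsSubmodular f) {G U : Finset V} (hGU : G ⊂ U) :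
    ∃ u ∈ U \ G, f U - f G ≤ #(U \ G) * (f (insert u G) - f G) := by
  obtain ⟨u, hu, hmax⟩ := exists_max_image (U \ G) (fun u => f (insert u G) - f G)
    (sdiff_nonempty.mpr (not_subset_of_ssubset hGU))
  refine ⟨u, hu, ?_⟩
  calc f U - f G = f (G ∪ (U \ G)) - f G := by rw [union_sdiff_of_subset hGU.subset]
    _ ≤ ∑ v ∈ U \ G, (f (insert v G) - f G) := hf.sub_le_sum_marginal G _ disjoint_sdiff
    _ ≤ #(U \ G) * (f (insert u G) - f G) := by
      simpa [nsmul_eq_mul] using sum_le_card_nsmul _ _ _ hmax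

theorem exists_subset_card_eq_mul_le (hf : IsSubmodular f) (hempty : 0 ≤ f ∅) (U : Finset V)
    {j : ℕ} (hj : j ≤ #U) : ∃ G ⊆ U, #G = j ∧ (j : ℝ) * f U ≤ #U * f G := by
  induction j with
  | zero => exact ⟨∅, empty_subset U, card_empty, by simpa using mul_nonneg (by positivity) hempty⟩
  | succ j ih =>
    obtain ⟨G, hGU, hGj, hG⟩ := ih (Nat.le_of_succ_le hj)
    have hGU' : G ⊂ U := ssubset_of_subset_of_ne hGU (by rintro rfl; omega)
    obtain ⟨u, hu, hgain⟩ := hf.exists_marginal_ge hGU'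
    rw [mem_sdiff] at hu
    refine ⟨insert u G, insert_subset hu.1 hGU, by rw [card_insert_of_notMem hu.2, hGj], ?_⟩
    rw [card_sdiff_of_subset hGU, hGj, Nat.cast_sub (Nat.le_of_succ_le hj)] at hgain
    have hjU : (j : ℝ) + 1 ≤ #U := by exact_mod_cast hj
    -- multiply the goal by `#U - j > 0` and combine `hG` (scaled by `#U - j - 1`) with `hgain`
    rw [← mul_le_mul_iff_of_pos_right (by linarith : (0 : ℝ) < #U - j)]
    push_cast
    nlinarith [mul_le_mul_of_nonneg_right hG (by linarith : (0 : ℝ) ≤ #U - j - 1),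
      mul_le_mul_of_nonneg_left hgain (Nat.cast_nonneg #U)]

end IsSubmodular

end

theorem stmt_6_general {V : Type*} [DecidableEq V]
    (f : Finset V → ℝ)
    (hsub : ∀ S T : Finset V, S ⊆ T → ∀ i ∉ T,
      f (insert i T) - f T ≤ f (insert i S) - f S)
    (hempty : f ∅ = 0)
    (k : ℕ) (hk : 1 ≤ k)
    (OPT : ℝ)
    (hOPT : IsGreatest {x : ℝ | ∃ S : Finset V, S.card ≤ k ∧ f S = x} OPT)
    (U : Finset V) (h : ℕ) (hU : U.card = h) (hkh : k ≤ h) :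
    f U ≤ ((h : ℝ) / (k : ℝ)) * OPT := by
  obtain ⟨G, -, hGk, hG⟩ := IsSubmodular.exists_subset_card_eq_mul_le (f := f) hsub
    hempty.ge U (hU ▸ hkh)
  have hGOPT : f G ≤ OPT := hOPT.2 ⟨G, hGk.le, rfl⟩
  have hk0 : (0 : ℝ) < k := by exact_mod_cast hk
  rw [hU] at hG
  rw [div_mul_eq_mul_div, le_div_iff₀ hk0]
  calc f U * k ≤ h * f G := by linarith
    _ ≤ h * OPT := by gcongr

theorem stmt_6 {V : Type*} [Fintype V] [DecidableEq V]
    (f : Finset V → ℝ)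
    (hmono : ∀ S T : Finset V, S ⊆ T → f S ≤ f T)
    (hsub : ∀ S T : Finset V, S ⊆ T → ∀ i ∉ T,
      f (insert i T) - f T ≤ f (insert i S) - f S)
    (hempty : f ∅ = 0)
    (k : ℕ) (hk : 1 ≤ k)
    (OPT : ℝ)
    (hOPT : IsGreatest {x : ℝ | ∃ S : Finset V, S.card ≤ k ∧ f S = x} OPT)
    (U : Finset V) (h : ℕ) (hU : U.card = h) (hkh : k ≤ h) :
    f U ≤ ((h : ℝ) / (k : ℝ)) * OPT :=
  stmt_6_general f hsub hempty k hk OPT hOPT U h hU hkh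
end

section
/- Let G = (V,E) be a finite undirected graph such that the sum of all vertex degrees strictly greater than 2 is at most α (an α-bounded graph). Suppose U ⊆ V has at most k connected components (as an induced subgraph). Then the boundary ∂U = {u ∈ U : ∃ v ∉ U with {u,v} ∈ E} satisfies |∂U| ≤ α + 2k. -/
open SimpleGraph Finset

private lemma reach_del {V : Type*} {G : SimpleGraph V} (a b : V) {u v : V}
    (h : G.Reachable u v) :
    (G \ fromEdgeSet {s(a,b)}).Reachable u v ∨
      (((G \ fromEdgeSet {s(a,b)}).Reachable u a ∨ (G \ fromEdgeSet {s(a,b)}).Reachable u b) ∧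
       ((G \ fromEdgeSet {s(a,b)}).Reachable v a ∨ (G \ fromEdgeSet {s(a,b)}).Reachable v b)) := by
  set H := G \ fromEdgeSet {s(a,b)} with hH
  obtain ⟨p⟩ := h
  induction p with
  | nil => exact Or.inl (Reachable.refl _)
  | @cons u w v h' p ih =>
    by_cases he : s(u, w) = s(a, b)
    · rw [Sym2.eq_iff] at he
      have hu : H.Reachable u a ∨ H.Reachable u b := by
        rcases he with ⟨rfl, rfl⟩ | ⟨rfl, rfl⟩
        · exact Or.inl (Reachable.refl _)
        · exact Or.inr (Reachable.refl _)
      have hw : H.Reachable w a ∨ H.Reachable w b := by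
        rcases he with ⟨rfl, rfl⟩ | ⟨rfl, rfl⟩
        · exact Or.inr (Reachable.refl _)
        · exact Or.inl (Reachable.refl _)
      refine Or.inr ⟨hu, ?_⟩
      rcases ih with hr | ⟨_, hv⟩
      · rcases hw with h1 | h1
        · exact Or.inl (hr.symm.trans h1)
        · exact Or.inr (hr.symm.trans h1)
      · exact hv
    · have hadj : H.Adj u w := by
        rw [hH]
        simp only [sdiff_adj, fromEdgeSet_adj, Set.mem_singleton_iff]
        exact ⟨h', fun hc => he hc.1⟩
      rcases ih with hr | ⟨hw, hv⟩
      · exact Or.inl (hadj.reachable.trans hr)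
      · refine Or.inr ⟨?_, hv⟩
        rcases hw with h1 | h1
        · exact Or.inl (hadj.reachable.trans h1)
        · exact Or.inr (hadj.reachable.trans h1)

private lemma comp_del {V : Type*} [Finite V] (G : SimpleGraph V) (a b : V) :
    Nat.card (G \ fromEdgeSet {s(a,b)}).ConnectedComponent ≤
      Nat.card G.ConnectedComponent + 1 := by
  classical
  set H := G \ fromEdgeSet {s(a,b)} with hH
  have hle : H ≤ G := sdiff_le
  let f : H.ConnectedComponent → G.ConnectedComponent ⊕ Unit := fun C =>
    if C = H.connectedComponentMk b then Sum.inr () else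
      Sum.inl (C.map (Hom.ofLE hle))
  have hinj : Function.Injective f := by
    intro C1 C2 hf
    simp only [f] at hf
    by_cases h1 : C1 = H.connectedComponentMk b <;>
      by_cases h2 : C2 = H.connectedComponentMk b
    · rw [h1, h2]
    · rw [if_pos h1, if_neg h2] at hf; simp at hf
    · rw [if_neg h1, if_pos h2] at hf; simp at hf
    · rw [if_neg h1, if_neg h2] at hf
      obtain ⟨u, rfl⟩ : ∃ u, H.connectedComponentMk u = C1 := C1.exists_rep
      obtain ⟨v, rfl⟩ : ∃ v, H.connectedComponentMk v = C2 := C2.exists_rep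
      simp only [Sum.inl.injEq, ConnectedComponent.map_mk, Hom.ofLE_apply] at hf
      have hr : G.Reachable u v := ConnectedComponent.exact hf
      rcases reach_del a b hr with hr' | ⟨hu, hv⟩
      · exact ConnectedComponent.sound hr'
      · have hua : H.Reachable u a := by
          rcases hu with h | h
          · exact h
          · exact absurd (ConnectedComponent.sound h) h1
        have hva : H.Reachable v a := by
          rcases hv with h | h
          · exact h
          · exact absurd (ConnectedComponent.sound h) h2
        exact ConnectedComponent.sound (hua.trans hva.symm)
  calc Nat.card H.ConnectedComponent ≤ Nat.card (G.ConnectedComponent ⊕ Unit) :=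
        Nat.card_le_card_of_injective f hinj
    _ = Nat.card G.ConnectedComponent + 1 := by simp [Nat.card_sum]

private lemma card_le_edges_add_comps {V : Type*} [Fintype V] (G : SimpleGraph V) :
    Fintype.card V ≤ G.edgeSet.ncard + Nat.card G.ConnectedComponent := by
  classical
  generalize hn : G.edgeSet.ncard = n
  induction n generalizing G with
  | zero =>
    have hemp : G.edgeSet = ∅ := by
      rwa [Set.ncard_eq_zero G.edgeSet.toFinite] at hn
    have hbot : G = ⊥ := edgeSet_eq_empty.mp hemp
    subst hbot
    have : Function.Injective ((⊥ : SimpleGraph V).connectedComponentMk) := by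
      intro u v h
      exact reachable_bot.mp (ConnectedComponent.exact h)
    simpa using Nat.card_le_card_of_injective _ this
  | succ n ih =>
    have hne : G.edgeSet.Nonempty := by
      rw [Set.nonempty_iff_ne_empty]
      intro h
      rw [h] at hn
      simp at hn
    obtain ⟨e, he⟩ := hne
    induction e with
    | h a b =>
      have hE : (G \ fromEdgeSet {s(a,b)}).edgeSet = G.edgeSet \ {s(a,b)} := by
        simp [edgeSet_sdiff, edgeSet_fromEdgeSet, edgeSet_sdiff_sdiff_isDiag]
      have hcard : (G \ fromEdgeSet {s(a,b)}).edgeSet.ncard = n := by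
        rw [hE, Set.ncard_sdiff_singleton_of_mem he]
        omega
      have h1 := ih _ hcard
      have h2 := comp_del G a b
      omega

private lemma leaves_le {W : Type*} [Fintype W] (H : SimpleGraph W) [DecidableRel H.Adj] :
    (Finset.univ.filter fun v => H.degree v ≤ 1).card ≤
      2 * Nat.card H.ConnectedComponent +
        ∑ v ∈ Finset.univ.filter (fun v => 2 < H.degree v), (H.degree v - 2) := by
  classical
  set n := Fintype.card W with hn
  set c := Nat.card H.ConnectedComponent with hc
  have h1 : n ≤ H.edgeSet.ncard + c := card_le_edges_add_comps H
  have hE : H.edgeSet.ncard = H.edgeFinset.card := Set.ncard_eq_toFinset_card' _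
  have h2 : ∑ v, H.degree v = 2 * H.edgeFinset.card := H.sum_degrees_eq_twice_card_edges
  have h3 : (Finset.univ.filter fun v => H.degree v ≤ 1).card ≤
      ∑ v, (2 - min (H.degree v) 2) := by
    calc (Finset.univ.filter fun v => H.degree v ≤ 1).card
        = ∑ v ∈ Finset.univ.filter (fun v => H.degree v ≤ 1), 1 := by rw [Finset.card_eq_sum_ones]
      _ ≤ ∑ v ∈ Finset.univ.filter (fun v => H.degree v ≤ 1), (2 - min (H.degree v) 2) := by
          apply Finset.sum_le_sum
          intro v hv
          rw [Finset.mem_filter] at hv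
          omega
      _ ≤ ∑ v, (2 - min (H.degree v) 2) :=
          Finset.sum_le_sum_of_subset (Finset.filter_subset _ _)
  have h4 : ∑ v, (2 - min (H.degree v) 2) + ∑ v, min (H.degree v) 2 = 2 * n := by
    rw [← Finset.sum_add_distrib]
    have : ∀ v : W, (2 - min (H.degree v) 2) + min (H.degree v) 2 = 2 := fun v => by omega
    simp only [this, Finset.sum_const, Finset.card_univ, smul_eq_mul, mul_comm]
    rfl
  have h5 : ∑ v, H.degree v =
      ∑ v, min (H.degree v) 2 + ∑ v, (H.degree v - min (H.degree v) 2) := by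
    rw [← Finset.sum_add_distrib]
    apply Finset.sum_congr rfl
    intro v _
    omega
  have h6 : ∑ v, (H.degree v - min (H.degree v) 2) =
      ∑ v ∈ Finset.univ.filter (fun v => 2 < H.degree v), (H.degree v - 2) := by
    rw [Finset.sum_filter]
    apply Finset.sum_congr rfl
    intro v _
    split_ifs with h <;> omega
  omega

theorem stmt_7 {V : Type*} [Fintype V] [DecidableEq V]
    (G : SimpleGraph V) [DecidableRel G.Adj]
    (α k : ℕ)
    (hbounded : ∑ v ∈ Finset.univ.filter (fun v => 2 < G.degree v), G.degree v ≤ α)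
    (U : Set V)
    (hcomp : Nat.card (SimpleGraph.induce U G).ConnectedComponent ≤ k) :
    Set.ncard {u ∈ U | ∃ v ∉ U, G.Adj u v} ≤ α + 2 * k := by
  classical
  haveI : Fintype ↥U := (Set.toFinite U).fintype
  set H : SimpleGraph ↥U := SimpleGraph.induce U G with hHdef
  haveI : DecidableRel H.Adj := Classical.decRel _
  -- degrees in H are at most degrees in G
  have hdegle : ∀ v : ↥U, H.degree v ≤ G.degree v.val := by
    intro v
    rw [← SimpleGraph.card_neighborFinset_eq_degree, ← SimpleGraph.card_neighborFinset_eq_degree]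
    apply Finset.card_le_card_of_injOn (fun x => x.val)
    · intro x hx
      simp only [Finset.mem_coe, SimpleGraph.mem_neighborFinset] at hx ⊢
      exact hx
    · exact fun x _ y _ h => Subtype.ext h
  -- boundary vertices of small G-degree have H-degree ≤ 1
  have hbdry : ∀ v : ↥U, (∃ w ∉ U, G.Adj v.val w) → G.degree v.val ≤ 2 → H.degree v ≤ 1 := by
    intro v ⟨w, hwU, hadj⟩ hdeg
    have hkey : H.degree v + 1 ≤ G.degree v.val := by
      rw [← SimpleGraph.card_neighborFinset_eq_degree, ← SimpleGraph.card_neighborFinset_eq_degree]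
      have hsub : (H.neighborFinset v).image Subtype.val ⊆ G.neighborFinset v.val \ {w} := by
        intro x hx
        simp only [Finset.mem_image, SimpleGraph.mem_neighborFinset] at hx
        obtain ⟨y, hy, rfl⟩ := hx
        rw [Finset.mem_sdiff, SimpleGraph.mem_neighborFinset, Finset.mem_singleton]
        exact ⟨hy, fun h => hwU (h ▸ y.property)⟩
      have himg : ((H.neighborFinset v).image Subtype.val).card = (H.neighborFinset v).card :=
        Finset.card_image_of_injective _ Subtype.val_injective
      have hw : w ∈ G.neighborFinset v.val := by
        rw [SimpleGraph.mem_neighborFinset]; exact hadj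
      have := Finset.card_le_card hsub
      rw [himg, Finset.card_sdiff_of_subset (Finset.singleton_subset_iff.mpr hw),
        Finset.card_singleton] at this
      have hpos : 1 ≤ (G.neighborFinset v.val).card := Finset.card_pos.mpr ⟨w, hw⟩
      omega
    omega
  -- the boundary as a finset
  set BF : Finset ↥U := Finset.univ.filter (fun v => ∃ w ∉ U, G.Adj v.val w) with hBF
  have hset : {u ∈ U | ∃ v ∉ U, G.Adj u v} = ↑(BF.image Subtype.val) := by
    ext x
    simp only [Set.mem_setOf_eq, Finset.coe_image, Set.mem_image, Finset.mem_coe, hBF,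
      Finset.mem_filter, Finset.mem_univ, true_and]
    constructor
    · rintro ⟨hxU, hw⟩
      exact ⟨⟨x, hxU⟩, hw, rfl⟩
    · rintro ⟨⟨y, hyU⟩, hw, rfl⟩
      exact ⟨hyU, hw⟩
  rw [hset, Set.ncard_coe_finset, Finset.card_image_of_injective _ Subtype.val_injective]
  set A : Finset ↥U := Finset.univ.filter (fun v => 2 < G.degree v.val) with hA
  set Lf : Finset ↥U := Finset.univ.filter (fun v => H.degree v ≤ 1) with hLf
  have hBsub : BF ⊆ A ∪ Lf := by
    intro v hv
    rw [hBF, Finset.mem_filter] at hv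
    rw [Finset.mem_union, hA, hLf, Finset.mem_filter, Finset.mem_filter]
    by_cases hd : 2 < G.degree v.val
    · exact Or.inl ⟨Finset.mem_univ _, hd⟩
    · exact Or.inr ⟨Finset.mem_univ _, hbdry v hv.2 (by omega)⟩
  have h1 : BF.card ≤ A.card + Lf.card :=
    le_trans (Finset.card_le_card hBsub) (Finset.card_union_le _ _)
  set S := ∑ v ∈ Finset.univ.filter (fun v : ↥U => 2 < H.degree v), (H.degree v - 2) with hS
  have h2 : Lf.card ≤ 2 * Nat.card H.ConnectedComponent + S := leaves_le H
  have hAsub : (Finset.univ.filter (fun v : ↥U => 2 < H.degree v)) ⊆ A := by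
    intro v hv
    rw [Finset.mem_filter] at hv
    rw [hA, Finset.mem_filter]
    exact ⟨Finset.mem_univ _, lt_of_lt_of_le hv.2 (hdegle v)⟩
  have hS1 : S ≤ ∑ v ∈ A, (G.degree v.val - 1) := by
    calc S ≤ ∑ v ∈ Finset.univ.filter (fun v : ↥U => 2 < H.degree v), (G.degree v.val - 1) := by
          apply Finset.sum_le_sum
          intro v hv
          have := hdegle v
          omega
      _ ≤ ∑ v ∈ A, (G.degree v.val - 1) :=
          Finset.sum_le_sum_of_subset hAsub
  have h3 : A.card + S ≤ ∑ v ∈ A, G.degree v.val := by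
    calc A.card + S ≤ ∑ v ∈ A, 1 + ∑ v ∈ A, (G.degree v.val - 1) := by
          rw [← Finset.card_eq_sum_ones]; omega
      _ = ∑ v ∈ A, (1 + (G.degree v.val - 1)) := (Finset.sum_add_distrib).symm
      _ ≤ ∑ v ∈ A, G.degree v.val := by
          apply Finset.sum_le_sum
          intro v hv
          rw [hA, Finset.mem_filter] at hv
          omega
  have h4 : ∑ v ∈ A, G.degree v.val ≤
      ∑ w ∈ Finset.univ.filter (fun w => 2 < G.degree w), G.degree w := by
    rw [← Finset.sum_image (f := fun w => G.degree w)
      (g := Subtype.val) (fun x _ y _ h => Subtype.ext h)]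
    apply Finset.sum_le_sum_of_subset
    intro x hx
    simp only [Finset.mem_image, hA, Finset.mem_filter, Finset.mem_univ, true_and] at hx ⊢
    obtain ⟨y, hy, rfl⟩ := hx
    exact hy
  omega
end

section
/- In the independent cascade model on an arbitrary finite directed influence graph, the marginal gain function is adaptively submodular: for any partial realisations ψ ⊆ ψ' and any node i ∉ R(ψ'), E_L[f(ψ' ∪ {(i, R({i},L))}) - f(ψ') | ψ' ⊆ φ_L] ≤ E_L[f(ψ ∪ {(i, R({i},L))}) - f(ψ) | ψ ⊆ φ_L]. -/
open Finset

/-- Probability of a live-edge graph `L` (a set of directed edges over the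
finite vertex type `V`), where each potential edge `e` is included
independently with probability `p e`. -/
noncomputable def liveProb {V : Type*} [Fintype V] [DecidableEq V]
    (p : V × V → ℝ) (L : Finset (V × V)) : ℝ :=
  (∏ e ∈ L, p e) * ∏ e ∈ Lᶜ, (1 - p e)

/-- Nodes reached from the seed set `S` in the live-edge graph `L`. -/
noncomputable def reachSet {V : Type*} [Fintype V] [DecidableEq V]
    (L : Finset (V × V)) (S : Finset V) : Finset V := by
  classical
  exact Finset.univ.filter fun v =>
    ∃ u ∈ S, Relation.ReflTransGen (fun a b => (a, b) ∈ L) u v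

/-- The live-edge graph `L` is compatible with the partial realisation with
domain `T` and realisation map `ψ` (i.e. `ψ ⊆ φ_L`). -/
def compatible {V : Type*} [Fintype V] [DecidableEq V]
    (ψ : V → Finset V) (T : Finset V) (L : Finset (V × V)) : Prop :=
  ∀ v ∈ T, ψ v = reachSet L {v}

noncomputable instance {V : Type*} [Fintype V] [DecidableEq V]
    (ψ : V → Finset V) (T : Finset V) :
    DecidablePred (compatible ψ T) := fun L => by
  unfold compatible; infer_instance


/-!
Write `B = R(ψ)`. A live-edge graph compatible with `ψ` has no live edge leaving `B`, so the
marginal gain of `i` is the number of vertices outside `B` that `i` reaches through live edges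
not starting in `B`. Compatibility with `ψ` depends only on the edges starting in `B` and the gain
only on the other edges, so by independence of the edges the conditional expected gain equals the
unconditional one. The latter is antitone in `B`, and `R(ψ|S) ⊆ R(ψ|S')`.
-/

section

variable {α : Type*} [DecidableEq α]

theorem sum_univ_eq_sum_powerset_compl [Fintype α] {β : Type*} [AddCommMonoid β]
    (F : Finset α) (f : Finset α → Finset α → β) :
    ∑ L, f (L ∩ F) (L \ F) = ∑ K ∈ F.powerset, ∑ K' ∈ Fᶜ.powerset, f K K' := by
  rw [← sum_product']
  refine sum_nbij' (fun L => (L ∩ F, L \ F)) (fun K => K.1 ∪ K.2) ?_ ?_ ?_ ?_ ?_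
  · intro L _
    simp only [mem_product, mem_powerset]
    exact ⟨inter_subset_right, fun e he => mem_compl.mpr (mem_sdiff.mp he).2⟩
  · simp
  · intro L _
    exact sup_inf_sdiff L F
  · rintro ⟨K, K'⟩ hK
    simp only [mem_product, mem_powerset] at hK
    refine Prod.ext ?_ ?_ <;> ext e <;> have := @hK.1 e <;> have := @hK.2 e <;>
      simp_all only [mem_inter, mem_union, mem_sdiff, mem_compl] <;> tauto
  · intros; rfl

/-- The probability that, among the potential edges in `F`, exactly those in `K` are live. -/
noncomputable def liveProbOn (p : α → ℝ) (F K : Finset α) : ℝ :=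
  (∏ e ∈ K, p e) * ∏ e ∈ F \ K, (1 - p e)

theorem card_union_sub_card (B R : Finset α) :
    ((B ∪ R).card : ℝ) - B.card = (R \ B).card := by
  rw [union_comm, ← card_sdiff_add_card R B]
  push_cast
  ring

theorem sum_liveProbOn_powerset (p : α → ℝ) (F : Finset α) :
    ∑ K ∈ F.powerset, liveProbOn p F K = 1 := by
  simp only [liveProbOn, ← prod_add, add_sub_cancel, prod_const_one]

end

section

variable {V : Type*} [Fintype V] [DecidableEq V]

theorem liveProb_nonneg {p : V × V → ℝ} (hp : ∀ e, 0 ≤ p e ∧ p e ≤ 1)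
    (L : Finset (V × V)) : 0 ≤ liveProb p L :=
  mul_nonneg (prod_nonneg fun e _ => (hp e).1) (prod_nonneg fun e _ => sub_nonneg.mpr (hp e).2)

theorem liveProb_eq_liveProbOn_mul (p : V × V → ℝ) (F L : Finset (V × V)) :
    liveProb p L = liveProbOn p F (L ∩ F) * liveProbOn p Fᶜ (L \ F) := by
  have hin : Lᶜ ∩ F = F \ (L ∩ F) := by ext; simp; tauto
  have hout : Lᶜ \ F = Fᶜ \ (L \ F) := by ext; simp; tauto
  rw [liveProb, liveProbOn, liveProbOn, ← prod_inter_mul_prod_sdiff L F,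
    ← prod_inter_mul_prod_sdiff Lᶜ F, hin, hout]
  ring

theorem sum_liveProb_mul_mul (p : V × V → ℝ) (F : Finset (V × V))
    (a b : Finset (V × V) → ℝ) :
    ∑ L, liveProb p L * (a (L ∩ F) * b (L \ F)) =
      (∑ K ∈ F.powerset, liveProbOn p F K * a K) *
        ∑ K ∈ Fᶜ.powerset, liveProbOn p Fᶜ K * b K := by
  simp_rw [liveProb_eq_liveProbOn_mul p F, sum_mul_sum]
  rw [sum_univ_eq_sum_powerset_compl F
    (fun K K' => liveProbOn p F K * liveProbOn p Fᶜ K' * (a K * b K'))]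
  refine sum_congr rfl fun _ _ => sum_congr rfl fun _ _ => by ring

theorem sum_filter_liveProb_mul_div_eq (p : V × V → ℝ) (F : Finset (V × V))
    (c : Finset (V × V) → Prop) [DecidablePred c] (hc : ∀ L, c L ↔ c (L ∩ F))
    (g : Finset (V × V) → ℝ) (hg : ∀ L, g L = g (L \ F))
    (hpos : 0 < ∑ L ∈ univ.filter c, liveProb p L) :
    (∑ L ∈ univ.filter c, liveProb p L * g L) / (∑ L ∈ univ.filter c, liveProb p L) =
      ∑ L, liveProb p L * g L := by
  have hsplit : ∀ h : Finset (V × V) → ℝ, ∑ L ∈ univ.filter c, liveProb p L * h (L \ F) =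
      (∑ K ∈ F.powerset, liveProbOn p F K * if c K then 1 else 0) *
        ∑ K ∈ Fᶜ.powerset, liveProbOn p Fᶜ K * h K := by
    intro h
    rw [← sum_liveProb_mul_mul, sum_filter]
    refine sum_congr rfl fun L _ => ?_
    simp only [← hc L]
    split_ifs <;> ring
  have hnum := hsplit g
  have hden := hsplit fun _ => 1
  have hall := sum_liveProb_mul_mul p F (fun _ => 1) g
  simp only [mul_one, sum_liveProbOn_powerset, one_mul, ← hg] at hnum hden hall
  rw [hden] at hpos ⊢
  rw [hnum, hall, mul_div_cancel_left₀ _ hpos.ne']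

theorem mem_reachSet_singleton {L : Finset (V × V)} {u v : V} :
    v ∈ reachSet L {u} ↔ Relation.ReflTransGen (fun a b => (a, b) ∈ L) u v := by
  simp [reachSet]

theorem reachSet_singleton_mono {L L' : Finset (V × V)} (h : L ⊆ L') (u : V) :
    reachSet L {u} ⊆ reachSet L' {u} := fun _ hv =>
  mem_reachSet_singleton.mpr <|
    Relation.ReflTransGen.mono (fun _ _ hab => h hab) _ _ (mem_reachSet_singleton.mp hv)

def edgesFrom (B : Finset V) : Finset (V × V) :=
  univ.filter fun e => e.1 ∈ B

theorem mem_edgesFrom {B : Finset V} {e : V × V} : e ∈ edgesFrom B ↔ e.1 ∈ B := by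
  simp [edgesFrom]

theorem edgesFrom_mono {B B' : Finset V} (h : B ⊆ B') : edgesFrom B ⊆ edgesFrom B' :=
  fun _ he => mem_edgesFrom.mpr (h (mem_edgesFrom.mp he))

theorem reachSet_eq_of_reachSet_inter_edgesFrom_subset {L : Finset (V × V)} {B : Finset V} {u : V}
    (h : reachSet (L ∩ edgesFrom B) {u} ⊆ B) :
    reachSet L {u} = reachSet (L ∩ edgesFrom B) {u} := by
  refine (reachSet_singleton_mono inter_subset_left u).antisymm' fun v hv => ?_
  rw [mem_reachSet_singleton] at hv ⊢
  induction hv with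
  | refl => exact .refl
  | @tail b c _ hbc ih =>
    have hb : b ∈ B := h (mem_reachSet_singleton.mpr ih)
    exact ih.tail (mem_inter.mpr ⟨hbc, mem_edgesFrom.mpr hb⟩)

theorem reachSet_sdiff_eq_of_closed {L : Finset (V × V)} {B : Finset V}
    (hB : ∀ a b, (a, b) ∈ L → a ∈ B → b ∈ B) (i : V) :
    reachSet L {i} \ B = reachSet (L \ edgesFrom B) {i} \ B := by
  refine (sdiff_subset_sdiff (reachSet_singleton_mono sdiff_subset i) subset_rfl).antisymm' ?_
  intro v hv
  rw [mem_sdiff, mem_reachSet_singleton] at hv ⊢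
  obtain ⟨hv, hvB⟩ := hv
  refine ⟨?_, hvB⟩
  induction hv with
  | refl => exact .refl
  | @tail b c _ hbc ih =>
    have hb : b ∉ B := fun hb => hvB (hB b c hbc hb)
    exact (ih hb).tail (mem_sdiff.mpr ⟨hbc, fun h => hb (mem_edgesFrom.mp h)⟩)

theorem reachSet_sdiff_edgesFrom_anti {L : Finset (V × V)} {B B' : Finset V} (h : B ⊆ B')
    (i : V) : reachSet (L \ edgesFrom B') {i} \ B' ⊆ reachSet (L \ edgesFrom B) {i} \ B :=
  sdiff_subset_sdiff
    (reachSet_singleton_mono (sdiff_subset_sdiff subset_rfl (edgesFrom_mono h)) i) h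

theorem compatible.biUnion_closed {ψ : V → Finset V} {S : Finset V} {L : Finset (V × V)}
    (hL : compatible ψ S L) :
    ∀ a b, (a, b) ∈ L → a ∈ S.biUnion ψ → b ∈ S.biUnion ψ := by
  intro a b hab ha
  obtain ⟨v, hv, hav⟩ := mem_biUnion.mp ha
  rw [hL v hv, mem_reachSet_singleton] at hav
  exact mem_biUnion.mpr ⟨v, hv, by rw [hL v hv, mem_reachSet_singleton]; exact hav.tail hab⟩

theorem compatible_iff_inter_edgesFrom {ψ : V → Finset V} {S : Finset V} {L : Finset (V × V)} :
    compatible ψ S L ↔ compatible ψ S (L ∩ edgesFrom (S.biUnion ψ)) := by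
  refine forall₂_congr fun v hv => ?_
  have hψ : ψ v ⊆ S.biUnion ψ := subset_biUnion_of_mem ψ hv
  constructor
  · intro h
    rwa [← reachSet_eq_of_reachSet_inter_edgesFrom_subset
      ((reachSet_singleton_mono inter_subset_left v).trans (h ▸ hψ))]
  · intro h
    rwa [reachSet_eq_of_reachSet_inter_edgesFrom_subset (h ▸ hψ)]

theorem condExp_gain_eq (p : V × V → ℝ) (ψ : V → Finset V) (S : Finset V) (i : V)
    (hpos : 0 < ∑ L ∈ univ.filter (fun L => compatible ψ S L), liveProb p L) :
    (∑ L ∈ univ.filter (fun L => compatible ψ S L), liveProb p L *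
        ((((S.biUnion ψ) ∪ reachSet L {i}).card : ℝ) - ((S.biUnion ψ).card : ℝ))) /
      (∑ L ∈ univ.filter (fun L => compatible ψ S L), liveProb p L) =
    ∑ L, liveProb p L *
      ((reachSet (L \ edgesFrom (S.biUnion ψ)) {i} \ S.biUnion ψ).card : ℝ) := by
  have hgain : ∀ L ∈ univ.filter (fun L => compatible ψ S L),
      ((((S.biUnion ψ) ∪ reachSet L {i}).card : ℝ) - ((S.biUnion ψ).card : ℝ)) =
        ((reachSet (L \ edgesFrom (S.biUnion ψ)) {i} \ S.biUnion ψ).card : ℝ) := by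
    intro L hL
    rw [card_union_sub_card, reachSet_sdiff_eq_of_closed (mem_filter.mp hL).2.biUnion_closed]
  rw [sum_congr rfl fun L hL => by rw [hgain L hL]]
  exact sum_filter_liveProb_mul_div_eq p _ _ (fun _ => compatible_iff_inter_edgesFrom) _
    (fun L => by rw [Finset.sdiff_idem]) hpos

end

theorem stmt_11_general {V : Type*} [Fintype V] [DecidableEq V]
    (p : V × V → ℝ) (hp : ∀ e, 0 ≤ p e ∧ p e ≤ 1)
    (ψ : V → Finset V) (S S' : Finset V) (hSS : S ⊆ S')
    (i : V)
    (hposS : 0 < ∑ L ∈ Finset.univ.filter (fun L => compatible ψ S L), liveProb p L)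
    (hposS' : 0 < ∑ L ∈ Finset.univ.filter (fun L => compatible ψ S' L), liveProb p L) :
    (∑ L ∈ Finset.univ.filter (fun L => compatible ψ S' L), liveProb p L *
        ((((S'.biUnion ψ) ∪ reachSet L {i}).card : ℝ) - ((S'.biUnion ψ).card : ℝ))) /
      (∑ L ∈ Finset.univ.filter (fun L => compatible ψ S' L), liveProb p L)
    ≤
    (∑ L ∈ Finset.univ.filter (fun L => compatible ψ S L), liveProb p L *
        ((((S.biUnion ψ) ∪ reachSet L {i}).card : ℝ) - ((S.biUnion ψ).card : ℝ))) /
      (∑ L ∈ Finset.univ.filter (fun L => compatible ψ S L), liveProb p L) := by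
  rw [condExp_gain_eq p ψ S' i hposS', condExp_gain_eq p ψ S i hposS]
  refine sum_le_sum fun L _ => mul_le_mul_of_nonneg_left ?_ (liveProb_nonneg hp L)
  exact_mod_cast card_le_card
    (reachSet_sdiff_edgesFrom_anti (biUnion_subset_biUnion_of_subset_left ψ hSS) i)

/-- Adaptive submodularity of the IC model with full-adoption feedback: the
conditional expected marginal gain of a node `i` not yet reached only decreases
as the observed partial realisation grows (`ψ` restricted to `S ⊆ S'`). -/
theorem stmt_11 {V : Type*} [Fintype V] [DecidableEq V]
    (p : V × V → ℝ) (hp : ∀ e, 0 ≤ p e ∧ p e ≤ 1)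
    (ψ : V → Finset V) (S S' : Finset V) (hSS : S ⊆ S')
    (hfeas : ∃ L : Finset (V × V), compatible ψ S' L)
    (i : V) (hi : i ∉ S'.biUnion ψ)
    (hposS : 0 < ∑ L ∈ Finset.univ.filter (fun L => compatible ψ S L), liveProb p L)
    (hposS' : 0 < ∑ L ∈ Finset.univ.filter (fun L => compatible ψ S' L), liveProb p L) :
    (∑ L ∈ Finset.univ.filter (fun L => compatible ψ S' L), liveProb p L *
        ((((S'.biUnion ψ) ∪ reachSet L {i}).card : ℝ) - ((S'.biUnion ψ).card : ℝ))) /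
      (∑ L ∈ Finset.univ.filter (fun L => compatible ψ S' L), liveProb p L)
    ≤
    (∑ L ∈ Finset.univ.filter (fun L => compatible ψ S L), liveProb p L *
        ((((S.biUnion ψ) ∪ reachSet L {i}).card : ℝ) - ((S.biUnion ψ).card : ℝ))) /
      (∑ L ∈ Finset.univ.filter (fun L => compatible ψ S L), liveProb p L) :=
  stmt_11_general p hp ψ S S' hSS i hposS hposS'
end

section
/- Let G be an in-arborescence (each non-root node has one edge directed to its parent) under the independent cascade model. For any set S ⊆ V and live-edge graph L, the boundary ∂R(S,L) = {u ∈ R(S,L) : ∃ (u,v) ∈ E, v ∉ R(S,L)} satisfies |∂R(S,L)| ≤ |S|. -/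
open Finset

/-!
Each reached vertex lies on the path from some seed towards the root, and the reached vertices
on the path from one seed form an initial segment of it. A boundary vertex has its unique
out-edge leaving the reached set, so it ends that segment: every seed accounts for at most one
boundary vertex.
-/

section Arborescence

variable {V : Type*} [Fintype V] [DecidableEq V]

theorem rightUnique_of_card_filter_le_one {E : Finset (V × V)}
    (harb : ∀ u : V, (univ.filter fun v => (u, v) ∈ E).card ≤ 1) :
    Relator.RightUnique fun a b => (a, b) ∈ E := fun a _ _ hb hc =>
  card_le_one.1 (harb a) _ (by simpa using hb) _ (by simpa using hc)

theorem mem_reachSet {L : Finset (V × V)} {S : Finset V} {v : V} :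
    v ∈ reachSet L S ↔ ∃ u ∈ S, Relation.ReflTransGen (fun a b => (a, b) ∈ L) u v := by
  simp [reachSet]

theorem mem_reachSet_of_mem_of_mem {L : Finset (V × V)} {S : Finset V} {u w : V}
    (hu : u ∈ reachSet L S) (huw : (u, w) ∈ L) : w ∈ reachSet L S := by
  obtain ⟨s, hs, hsu⟩ := mem_reachSet.1 hu
  exact mem_reachSet.2 ⟨s, hs, hsu.tail huw⟩

noncomputable def reachBoundary (E L : Finset (V × V)) (S : Finset V) : Finset V :=
  (reachSet L S).filter fun u => ∃ v : V, (u, v) ∈ E ∧ v ∉ reachSet L S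

variable {E L : Finset (V × V)} {S : Finset V}

theorem eq_of_mem_reachBoundary_of_reflTransGen (hE : Relator.RightUnique fun a b => (a, b) ∈ E)
    (hL : L ⊆ E) {u w : V} (hu : u ∈ reachBoundary E L S)
    (huw : Relation.ReflTransGen (fun a b => (a, b) ∈ L) u w) : u = w := by
  obtain ⟨huR, v, huv, hvR⟩ := mem_filter.1 hu
  rcases huw.cases_head with rfl | ⟨x, hux, -⟩
  · rfl
  · exact absurd (hE huv (hL hux) ▸ mem_reachSet_of_mem_of_mem huR hux) hvR

theorem eq_of_mem_reachBoundary_of_reflTransGen_of_reflTransGen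
    (hE : Relator.RightUnique fun a b => (a, b) ∈ E) (hL : L ⊆ E) {s u w : V}
    (hu : u ∈ reachBoundary E L S) (hw : w ∈ reachBoundary E L S)
    (hsu : Relation.ReflTransGen (fun a b => (a, b) ∈ L) s u)
    (hsw : Relation.ReflTransGen (fun a b => (a, b) ∈ L) s w) : u = w := by
  have hLfun : Relator.RightUnique fun a b => (a, b) ∈ L := fun _ _ _ hb hc => hE (hL hb) (hL hc)
  rcases Relation.ReflTransGen.total_of_right_unique hLfun hsu hsw with huw | hwu
  · exact eq_of_mem_reachBoundary_of_reflTransGen hE hL hu huw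
  · exact (eq_of_mem_reachBoundary_of_reflTransGen hE hL hw hwu).symm

theorem card_reachBoundary_le (hE : Relator.RightUnique fun a b => (a, b) ∈ E) (hL : L ⊆ E) :
    (reachBoundary E L S).card ≤ S.card := by
  classical
  have hcover : reachBoundary E L S ⊆ S.biUnion fun s =>
      (reachBoundary E L S).filter (Relation.ReflTransGen (fun a b => (a, b) ∈ L) s) := by
    intro u hu
    obtain ⟨s, hs, hsu⟩ := mem_reachSet.1 (mem_filter.1 hu).1
    exact mem_biUnion.2 ⟨s, hs, mem_filter.2 ⟨hu, hsu⟩⟩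
  calc (reachBoundary E L S).card
      ≤ (S.biUnion _).card := card_le_card hcover
    _ ≤ S.card * 1 := card_biUnion_le_card_mul _ _ _ fun s _ =>
        card_le_one.2 fun u hu w hw =>
          eq_of_mem_reachBoundary_of_reflTransGen_of_reflTransGen hE hL
            (mem_filter.1 hu).1 (mem_filter.1 hw).1 (mem_filter.1 hu).2 (mem_filter.1 hw).2
    _ = S.card := mul_one _

end Arborescence

/-- In an in-arborescence (every node has out-degree at most one, the edge to
its parent), the boundary of the reached set of a seed set `S` in any live-edge
subgraph `L` has at most `|S|` vertices. -/
theorem stmt_13 {V : Type*} [Fintype V] [DecidableEq V]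
    (E : Finset (V × V))
    (harb : ∀ u : V, (Finset.univ.filter fun v => (u, v) ∈ E).card ≤ 1)
    (L : Finset (V × V)) (hL : L ⊆ E)
    (S : Finset V) :
    ((reachSet L S).filter fun u =>
        ∃ v : V, (u, v) ∈ E ∧ v ∉ reachSet L S).card ≤ S.card :=
  card_reachBoundary_le (rightUnique_of_card_filter_le_one harb) hL
end

section
/- Let k ≥ 1 be an integer and A ≥ 0. Suppose a nonnegative sequence a : ℕ → ℝ satisfies a(0) = 0, a(t) is nondecreasing, and k·(a(t) - a(t-1)) ≥ A - 3·a(t-1) for all t ∈ {1,...,k}. Then a(k) ≥ ((1 - (max(0, 1-3/k))^k)/3)·A. -/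
theorem stmt_17 (k : ℕ) (hk : 1 ≤ k) (A : ℝ) (hA : 0 ≤ A)
    (a : ℕ → ℝ) (ha0 : a 0 = 0) (hnonneg : ∀ t, 0 ≤ a t) (hmono : Monotone a)
    (hrec : ∀ t ∈ Finset.Icc 1 k, (k : ℝ) * (a t - a (t - 1)) ≥ A - 3 * a (t - 1)) :
    a k ≥ ((1 - (max 0 (1 - 3 / (k : ℝ))) ^ k) / 3) * A := by
  have hkpos : (0 : ℝ) < k := by exact_mod_cast hk
  by_cases h3 : 3 ≤ k
  · -- q = 1 - 3/k ≥ 0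
    have hk3 : (3 : ℝ) ≤ k := by exact_mod_cast h3
    have hq0 : (0 : ℝ) ≤ 1 - 3 / k := by
      rw [sub_nonneg, div_le_one hkpos]; exact hk3
    have hmax : max 0 (1 - 3 / (k : ℝ)) = 1 - 3 / k := max_eq_right hq0
    rw [hmax]
    obtain ⟨q, hq0, hkq, hqe⟩ : ∃ q : ℝ, 0 ≤ q ∧ (k : ℝ) * q = k - 3 ∧ (1 - 3 / (k : ℝ)) = q :=
      ⟨_, hq0, by field_simp, rfl⟩
    rw [hqe]
    have key : ∀ t, t ≤ k → a t ≥ (1 - q ^ t) / 3 * A := by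
      intro t
      induction t with
      | zero => intro _; simp [ha0]
      | succ n ih =>
        intro hle
        have hn : n ≤ k := Nat.le_of_succ_le hle
        have ihn := ih hn
        have hr := hrec (n + 1) (Finset.mem_Icc.mpr ⟨Nat.succ_le_succ (Nat.zero_le n), hle⟩)
        simp only [Nat.add_sub_cancel] at hr
        have h2 : q * ((1 - q ^ n) / 3 * A) ≤ q * a n :=
          mul_le_mul_of_nonneg_left ihn hq0
        have key2 : (k : ℝ) * ((1 - q ^ (n + 1)) / 3 * A) ≤ (k : ℝ) * a (n + 1) := by
          have e1 : (k : ℝ) * q * a n = (k - 3) * a n := by rw [hkq]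
          have e2 : (k : ℝ) * q * A = (k - 3) * A := by rw [hkq]
          rw [pow_succ]
          nlinarith [hr, e1, e2, mul_le_mul_of_nonneg_left h2 hkpos.le]
        exact le_of_mul_le_mul_left key2 hkpos
    exact key k le_rfl
  · -- k < 3, so q = 0
    have hklt : (k : ℝ) < 3 := by exact_mod_cast Nat.lt_of_not_le h3
    have hq0 : (1 - 3 / (k : ℝ)) ≤ 0 := by
      rw [sub_nonpos, le_div_iff₀ hkpos]; linarith
    have hmax : max 0 (1 - 3 / (k : ℝ)) = 0 := max_eq_left hq0
    rw [hmax, zero_pow (Nat.one_le_iff_ne_zero.mp hk)]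
    have hr := hrec k (Finset.mem_Icc.mpr ⟨hk, le_rfl⟩)
    have hmon : a (k - 1) ≤ a k := hmono (Nat.sub_le k 1)
    nlinarith [hnonneg (k - 1), hnonneg k]
end
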